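/- Let Σ be a compact set of scrambling row-stochastic m×m matrices. Then there exists c < 1 such that δ(Q) ≤ c for all Q ∈ Σ, where δ is the Dobrushin ergodicity coefficient; consequently, for any sequence Q(1), Q(2), ... of matrices from Σ, δ(Q(1)Q(2)···Q(n)) ≤ cⁿ → 0 as n → ∞ (weak ergodicity). -/
import Mathlib


def RowStochastic {m : ℕ} (Q : Matrix (Fin m) (Fin m) ℝ) : Prop :=
  (∀ i j, 0 ≤ Q i j) ∧ ∀ i, ∑ j, Q i j = 1

def Scrambling {m : ℕ} (Q : Matrix (Fin m) (Fin m) ℝ) : Prop :=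
  ∀ i j, ∃ k, 0 < Q i k ∧ 0 < Q j k

noncomputable def dobrushin {m : ℕ} (Q : Matrix (Fin m) (Fin m) ℝ) : ℝ :=
  (1/2) * ⨆ p : Fin m × Fin m, ∑ k, |Q p.1 k - Q p.2 k|

/-- The product Q(1)·Q(2)···Q(n) of the first `n` matrices of a sequence. -/
def prodSeq {m : ℕ} (Q : ℕ → Matrix (Fin m) (Fin m) ℝ) : ℕ → Matrix (Fin m) (Fin m) ℝ
  | 0 => 1
  | n + 1 => prodSeq Q n * Q (n + 1)

section aux

variable {m : ℕ}

lemma sum_abs_le_two_dob (hm : 0 < m) (Q : Matrix (Fin m) (Fin m) ℝ) (i j : Fin m) :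
    ∑ k, |Q i k - Q j k| ≤ 2 * dobrushin Q := by
  haveI : Nonempty (Fin m) := Fin.pos_iff_nonempty.mp hm
  have hb : BddAbove (Set.range fun p : Fin m × Fin m => ∑ k, |Q p.1 k - Q p.2 k|) :=
    (Set.finite_range _).bddAbove
  have h := le_ciSup hb (i, j)
  simp only [dobrushin]
  linarith

lemma dob_nonneg (hm : 0 < m) (Q : Matrix (Fin m) (Fin m) ℝ) : 0 ≤ dobrushin Q := by
  haveI : Nonempty (Fin m) := Fin.pos_iff_nonempty.mp hm
  have hb : BddAbove (Set.range fun p : Fin m × Fin m => ∑ k, |Q p.1 k - Q p.2 k|) :=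
    (Set.finite_range _).bddAbove
  have h := le_ciSup hb ((⟨0, hm⟩ : Fin m), (⟨0, hm⟩ : Fin m))
  simp only [sub_self, abs_zero, Finset.sum_const_zero] at h
  simp only [dobrushin]
  linarith

lemma dob_le_of_forall (hm : 0 < m) (Q : Matrix (Fin m) (Fin m) ℝ) {b : ℝ}
    (h : ∀ i j : Fin m, ∑ k, |Q i k - Q j k| ≤ b) : dobrushin Q ≤ (1/2) * b := by
  haveI : Nonempty (Fin m) := Fin.pos_iff_nonempty.mp hm
  have hs : (⨆ p : Fin m × Fin m, ∑ k, |Q p.1 k - Q p.2 k|) ≤ b :=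
    ciSup_le fun p => h p.1 p.2
  simp only [dobrushin]
  linarith

lemma dob_le_one (hm : 0 < m) (Q : Matrix (Fin m) (Fin m) ℝ) (hQ : RowStochastic Q) :
    dobrushin Q ≤ 1 := by
  have h : ∀ i j : Fin m, ∑ k, |Q i k - Q j k| ≤ 2 := by
    intro i j
    calc ∑ k, |Q i k - Q j k| ≤ ∑ k, (Q i k + Q j k) := by
          apply Finset.sum_le_sum
          intro k _
          calc |Q i k - Q j k| ≤ |Q i k| + |Q j k| := abs_sub _ _
            _ = Q i k + Q j k := by
                rw [abs_of_nonneg (hQ.1 i k), abs_of_nonneg (hQ.1 j k)]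
      _ = 2 := by rw [Finset.sum_add_distrib, hQ.2 i, hQ.2 j]; norm_num
  have := dob_le_of_forall hm Q h
  linarith

lemma rs_one (hm : 0 < m) : RowStochastic (1 : Matrix (Fin m) (Fin m) ℝ) := by
  constructor
  · intro i j
    by_cases h : i = j <;> simp [Matrix.one_apply, h]
  · intro i
    simp [Matrix.one_apply]

lemma rs_mul (A B : Matrix (Fin m) (Fin m) ℝ) (hA : RowStochastic A) (hB : RowStochastic B) :
    RowStochastic (A * B) := by
  constructor
  · intro i j
    simp only [Matrix.mul_apply]
    exact Finset.sum_nonneg fun l _ => mul_nonneg (hA.1 i l) (hB.1 l j)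
  · intro i
    simp only [Matrix.mul_apply]
    rw [Finset.sum_comm]
    calc ∑ l, ∑ k, A i l * B l k = ∑ l, A i l * ∑ k, B l k := by
          simp [Finset.mul_sum]
      _ = ∑ l, A i l := by simp [hB.2]
      _ = 1 := hA.2 i

lemma tv_contract (hm : 0 < m) (B : Matrix (Fin m) (Fin m) ℝ) (hB : RowStochastic B)
    (u : Fin m → ℝ) (hu : ∑ l, u l = 0) :
    ∑ k, |∑ l, u l * B l k| ≤ dobrushin B * ∑ l, |u l| := by
  set up : Fin m → ℝ := fun l => max (u l) 0 with hup_def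
  set un : Fin m → ℝ := fun l => max (-u l) 0 with hun_def
  have hup : ∀ l, 0 ≤ up l := fun l => le_max_right _ _
  have hun : ∀ l, 0 ≤ un l := fun l => le_max_right _ _
  have hdiff : ∀ l, u l = up l - un l := by
    intro l
    rcases le_total (u l) 0 with h | h
    · simp [hup_def, hun_def, max_eq_right h, max_eq_left (neg_nonneg.mpr h)]
    · simp [hup_def, hun_def, max_eq_left h, max_eq_right (neg_nonpos.mpr h)]
  have habs : ∀ l, |u l| = up l + un l := by
    intro l
    rcases le_total (u l) 0 with h | h
    · simp [hup_def, hun_def, max_eq_right h, max_eq_left (neg_nonneg.mpr h), abs_of_nonpos h]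
    · simp [hup_def, hun_def, max_eq_left h, max_eq_right (neg_nonpos.mpr h), abs_of_nonneg h]
  set s : ℝ := ∑ l, up l with hs_def
  have hs2 : ∑ l, un l = s := by
    have h := hu
    simp only [hdiff, Finset.sum_sub_distrib] at h
    linarith
  have habs_sum : ∑ l, |u l| = 2 * s := by
    simp only [habs, Finset.sum_add_distrib, hs2]
    ring
  have hs0 : 0 ≤ s := Finset.sum_nonneg fun l _ => hup l
  rcases eq_or_lt_of_le hs0 with h0 | hpos
  · -- s = 0 ⇒ u = 0
    have hup0 : ∀ l ∈ Finset.univ, up l = 0 :=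
      (Finset.sum_eq_zero_iff_of_nonneg fun l _ => hup l).mp h0.symm
    have hun0 : ∀ l ∈ Finset.univ, un l = 0 := by
      have : ∑ l, un l = 0 := by rw [hs2, ← h0]
      exact (Finset.sum_eq_zero_iff_of_nonneg fun l _ => hun l).mp this
    have hu0 : ∀ l, u l = 0 := by
      intro l
      rw [hdiff l, hup0 l (Finset.mem_univ l), hun0 l (Finset.mem_univ l)]
      ring
    simp [hu0]
  · -- main case
    have key : ∀ k, s * (∑ l, u l * B l k)
        = ∑ i, ∑ j, up i * un j * (B i k - B j k) := by
      intro k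
      have e1 : ∑ i, ∑ j, up i * un j * B i k = (∑ i, up i * B i k) * s := by
        rw [← hs2, Finset.sum_mul_sum]
        apply Finset.sum_congr rfl
        intro i _
        apply Finset.sum_congr rfl
        intro j _
        ring
      have e2 : ∑ i, ∑ j, up i * un j * B j k = s * (∑ j, un j * B j k) := by
        rw [hs_def, Finset.sum_mul_sum]
        apply Finset.sum_congr rfl
        intro i _
        apply Finset.sum_congr rfl
        intro j _
        ring
      calc s * (∑ l, u l * B l k)
          = s * (∑ l, up l * B l k) - s * (∑ l, un l * B l k) := by
            simp only [hdiff, sub_mul, Finset.sum_sub_distrib]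
            ring
        _ = ∑ i, ∑ j, up i * un j * (B i k - B j k) := by
            simp only [mul_sub, Finset.sum_sub_distrib, e1, e2]
            ring
    have main : s * (∑ k, |∑ l, u l * B l k|) ≤ s * (dobrushin B * ∑ l, |u l|) := by
      calc s * (∑ k, |∑ l, u l * B l k|)
          = ∑ k, |s * (∑ l, u l * B l k)| := by
            rw [Finset.mul_sum]
            apply Finset.sum_congr rfl
            intro k _
            rw [abs_mul, abs_of_nonneg hs0]
        _ = ∑ k, |∑ i, ∑ j, up i * un j * (B i k - B j k)| := by
            simp only [key]
        _ ≤ ∑ k, ∑ i, ∑ j, up i * un j * |B i k - B j k| := by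
            apply Finset.sum_le_sum
            intro k _
            calc |∑ i, ∑ j, up i * un j * (B i k - B j k)|
                ≤ ∑ i, |∑ j, up i * un j * (B i k - B j k)| :=
                  Finset.abs_sum_le_sum_abs _ _
              _ ≤ ∑ i, ∑ j, up i * un j * |B i k - B j k| := by
                  apply Finset.sum_le_sum
                  intro i _
                  calc |∑ j, up i * un j * (B i k - B j k)|
                      ≤ ∑ j, |up i * un j * (B i k - B j k)| :=
                        Finset.abs_sum_le_sum_abs _ _
                    _ = ∑ j, up i * un j * |B i k - B j k| := by
                        apply Finset.sum_congr rfl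
                        intro j _
                        rw [abs_mul, abs_mul, abs_of_nonneg (hup i),
                          abs_of_nonneg (hun j)]
        _ = ∑ i, ∑ j, up i * un j * (∑ k, |B i k - B j k|) := by
            rw [Finset.sum_comm]
            apply Finset.sum_congr rfl
            intro i _
            rw [Finset.sum_comm]
            apply Finset.sum_congr rfl
            intro j _
            rw [Finset.mul_sum]
        _ ≤ ∑ i, ∑ j, up i * un j * (2 * dobrushin B) := by
            apply Finset.sum_le_sum
            intro i _
            apply Finset.sum_le_sum
            intro j _
            exact mul_le_mul_of_nonneg_left (sum_abs_le_two_dob hm B i j)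
              (mul_nonneg (hup i) (hun j))
        _ = s * s * (2 * dobrushin B) := by
            have step : ∀ i, ∑ j, up i * un j * (2 * dobrushin B)
                = up i * (s * (2 * dobrushin B)) := by
              intro i
              rw [← hs2, Finset.sum_mul, Finset.mul_sum]
              exact Finset.sum_congr rfl fun j _ => by ring
            simp only [step]
            rw [← Finset.sum_mul, ← hs_def]
            ring
        _ = s * (dobrushin B * ∑ l, |u l|) := by
            rw [habs_sum]
            ring
    exact le_of_mul_le_mul_left main hpos

lemma dob_mul (hm : 0 < m) (A B : Matrix (Fin m) (Fin m) ℝ)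
    (hA : RowStochastic A) (hB : RowStochastic B) :
    dobrushin (A * B) ≤ dobrushin A * dobrushin B := by
  have h : ∀ i j : Fin m, ∑ k, |(A * B) i k - (A * B) j k|
      ≤ 2 * (dobrushin A * dobrushin B) := by
    intro i j
    have hu : ∑ l, (A i l - A j l) = 0 := by
      simp [Finset.sum_sub_distrib, hA.2 i, hA.2 j]
    have h1 : ∀ k, (A * B) i k - (A * B) j k = ∑ l, (A i l - A j l) * B l k := by
      intro k
      simp [Matrix.mul_apply, sub_mul, Finset.sum_sub_distrib]
    calc ∑ k, |(A * B) i k - (A * B) j k|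
        = ∑ k, |∑ l, (A i l - A j l) * B l k| := by simp only [h1]
      _ ≤ dobrushin B * ∑ l, |A i l - A j l| := tv_contract hm B hB _ hu
      _ ≤ dobrushin B * (2 * dobrushin A) :=
          mul_le_mul_of_nonneg_left (sum_abs_le_two_dob hm A i j) (dob_nonneg hm B)
      _ = 2 * (dobrushin A * dobrushin B) := by ring
  have := dob_le_of_forall hm (A * B) h
  linarith

lemma dob_lt_one (hm : 0 < m) (Q : Matrix (Fin m) (Fin m) ℝ)
    (hQ : RowStochastic Q) (hs : Scrambling Q) : dobrushin Q < 1 := by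
  haveI : Nonempty (Fin m) := Fin.pos_iff_nonempty.mp hm
  have key : (⨆ p : Fin m × Fin m, ∑ k, |Q p.1 k - Q p.2 k|) < 2 := by
    rw [← Finset.sup'_univ_eq_ciSup]
    rw [Finset.sup'_lt_iff]
    intro p _
    obtain ⟨k₀, hk1, hk2⟩ := hs p.1 p.2
    have habs : ∀ k, |Q p.1 k - Q p.2 k|
        = Q p.1 k + Q p.2 k - 2 * min (Q p.1 k) (Q p.2 k) := by
      intro k
      rcases le_total (Q p.1 k) (Q p.2 k) with h | h
      · rw [abs_of_nonpos (by linarith), min_eq_left h]; ring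
      · rw [abs_of_nonneg (by linarith), min_eq_right h]; ring
    have e : ∑ k, |Q p.1 k - Q p.2 k|
        = 2 - 2 * ∑ k, min (Q p.1 k) (Q p.2 k) := by
      simp only [habs, Finset.sum_sub_distrib, Finset.sum_add_distrib, hQ.2,
        ← Finset.mul_sum]
      ring
    have hpos : 0 < ∑ k, min (Q p.1 k) (Q p.2 k) := by
      apply Finset.sum_pos' (fun k _ => le_min (hQ.1 p.1 k) (hQ.1 p.2 k))
      exact ⟨k₀, Finset.mem_univ k₀, lt_min hk1 hk2⟩
    rw [e]
    linarith
  simp only [dobrushin]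
  linarith

lemma dob_continuous (hm : 0 < m) :
    Continuous (fun Q : Matrix (Fin m) (Fin m) ℝ => dobrushin Q) := by
  haveI : Nonempty (Fin m) := Fin.pos_iff_nonempty.mp hm
  have heq : (fun Q : Matrix (Fin m) (Fin m) ℝ => dobrushin Q)
      = fun Q => (1/2) * Finset.univ.sup' Finset.univ_nonempty
        (fun p : Fin m × Fin m => ∑ k, |Q p.1 k - Q p.2 k|) := by
    funext Q
    rw [dobrushin, ← Finset.sup'_univ_eq_ciSup]
  rw [heq]
  apply Continuous.mul continuous_const
  apply Continuous.finset_sup'_apply Finset.univ_nonempty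
  intro p _
  apply continuous_finset_sum
  intro k _
  have h1 : Continuous fun Q : Matrix (Fin m) (Fin m) ℝ => Q p.1 k :=
    (continuous_apply k).comp (continuous_apply p.1)
  have h2 : Continuous fun Q : Matrix (Fin m) (Fin m) ℝ => Q p.2 k :=
    (continuous_apply k).comp (continuous_apply p.2)
  exact (h1.sub h2).abs

end aux

theorem compact_scrambling_weak_ergodic (m : ℕ) (hm : 0 < m)
    (S : Set (Matrix (Fin m) (Fin m) ℝ)) (hcompact : IsCompact S)
    (hstoch : ∀ Q ∈ S, RowStochastic Q) (hscr : ∀ Q ∈ S, Scrambling Q) :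
    ∃ c : ℝ, c < 1 ∧ (∀ Q ∈ S, dobrushin Q ≤ c) ∧
      ∀ Q : ℕ → Matrix (Fin m) (Fin m) ℝ, (∀ n, Q n ∈ S) →
        (∀ n : ℕ, dobrushin (prodSeq Q n) ≤ c ^ n) ∧
        Filter.Tendsto (fun n => dobrushin (prodSeq Q n)) Filter.atTop (nhds 0) := by
  rcases S.eq_empty_or_nonempty with hSe | hSne
  · refine ⟨0, by norm_num, ?_, ?_⟩
    · intro Q hQ; rw [hSe] at hQ; exact absurd hQ (Set.notMem_empty Q)
    · intro Q hQ
      exact absurd (hQ 0) (by rw [hSe]; exact Set.notMem_empty _)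
  · obtain ⟨Q₀, hQ₀S, hQ₀max'⟩ :=
      hcompact.exists_isMaxOn hSne (dob_continuous hm).continuousOn
    have hQ₀max : ∀ Q ∈ S, dobrushin Q ≤ dobrushin Q₀ := fun Q hQ => hQ₀max' hQ
    refine ⟨dobrushin Q₀, dob_lt_one hm Q₀ (hstoch Q₀ hQ₀S) (hscr Q₀ hQ₀S), hQ₀max, ?_⟩
    intro Q hQ
    set c : ℝ := dobrushin Q₀ with hc_def
    have hc0 : 0 ≤ c := dob_nonneg hm Q₀
    have hc1 : c < 1 := dob_lt_one hm Q₀ (hstoch Q₀ hQ₀S) (hscr Q₀ hQ₀S)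
    have hps : ∀ n, RowStochastic (prodSeq Q n) := by
      intro n
      induction n with
      | zero => exact rs_one hm
      | succ n ih => exact rs_mul _ _ ih (hstoch _ (hQ (n + 1)))
    have hbound : ∀ n : ℕ, dobrushin (prodSeq Q n) ≤ c ^ n := by
      intro n
      induction n with
      | zero =>
        simpa [prodSeq] using dob_le_one hm 1 (rs_one hm)
      | succ n ih =>
        calc dobrushin (prodSeq Q (n + 1))
            ≤ dobrushin (prodSeq Q n) * dobrushin (Q (n + 1)) :=
              dob_mul hm _ _ (hps n) (hstoch _ (hQ (n + 1)))
          _ ≤ c ^ n * c := by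
              apply mul_le_mul ih (hQ₀max _ (hQ (n + 1)))
                (dob_nonneg hm _) (pow_nonneg hc0 n)
          _ = c ^ (n + 1) := by ring
    refine ⟨hbound, ?_⟩
    apply squeeze_zero (fun n => dob_nonneg hm _) hbound
    exact tendsto_pow_atTop_nhds_zero_of_lt_one hc0 hc1
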